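/- arXiv:0803.0956 — 2 statements merged into one kernel-verified Lean document; each statement's English description precedes it below -/
import Mathlib

section
/- If S is a minimal separator of a chordal graph G, then at least two connected components of G \ S contain a vertex that is adjacent to every vertex of S. -/
open SimpleGraph

variable {V : Type*}

/-- `S` separates `u` and `w` in `G`: every walk from `u` to `w` meets `S`. -/
def Separates (G : SimpleGraph V) (S : Set V) (u w : V) : Prop :=
  ∀ p : G.Walk u w, ∃ x ∈ p.support, x ∈ S

/-- `S` is a minimal `{u,w}`-separator. -/
def IsMinUWSeparator (G : SimpleGraph V) (S : Set V) (u w : V) : Prop :=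
  u ≠ w ∧ ¬ G.Adj u w ∧ u ∉ S ∧ w ∉ S ∧ Separates G S u w ∧
    ∀ S' ⊂ S, ¬ Separates G S' u w

/-- `S` is a minimal separator of `G`. -/
def IsMinSeparator (G : SimpleGraph V) (S : Set V) : Prop :=
  ∃ u w : V, IsMinUWSeparator G S u w

/-- A vertex is simplicial if its neighborhood is a clique. -/
def IsSimplicial (G : SimpleGraph V) (v : V) : Prop :=
  G.IsClique (G.neighborSet v)

/-- A maximal clique (as a vertex set). -/
def IsMaxClique (G : SimpleGraph V) (s : Set V) : Prop :=
  G.IsClique s ∧ ∀ t : Set V, G.IsClique t → s ⊆ t → s = t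

/-- A graph is chordal if it has no induced cycle of length at least 4. -/
def Chordal (G : SimpleGraph V) : Prop :=
  ∀ n : ℕ, 4 ≤ n → IsEmpty (SimpleGraph.cycleGraph n ↪g G)

/-- The type of maximal cliques of `G`. -/
abbrev MaxCliques (G : SimpleGraph V) := {s : Set V // IsMaxClique G s}

/-- `T` is a clique tree of `G`: a tree on the maximal cliques such that for each vertex
the cliques containing it induce a connected subgraph. -/
def IsCliqueTree (G : SimpleGraph V) (T : SimpleGraph (MaxCliques G)) : Prop :=
  T.IsTree ∧ ∀ v : V, (T.induce {Q : MaxCliques G | v ∈ Q.1}).Connected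

/-- The set `X` induces a path in `T` (assuming `T` is a tree: connected with max degree 2). -/
def InducesPath {α : Type*} (T : SimpleGraph α) (X : Set α) : Prop :=
  (T.induce X).Connected ∧ ∀ x : X, ((T.induce X).neighborSet x).ncard ≤ 2

/-- `T` is a clique path tree of `G`. -/
def IsCliquePathTree (G : SimpleGraph V) (T : SimpleGraph (MaxCliques G)) : Prop :=
  T.IsTree ∧ ∀ v : V, InducesPath T {Q : MaxCliques G | v ∈ Q.1}

/-- `G` is a path graph: the empty graph, or a graph admitting a clique path tree. -/
def IsPathGraph (G : SimpleGraph V) : Prop :=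
  IsEmpty V ∨ ∃ T : SimpleGraph (MaxCliques G), IsCliquePathTree G T

/-- `G` is an interval graph: intersection graph of closed real intervals. -/
def IsIntervalGraph (G : SimpleGraph V) : Prop :=
  ∃ f : V → Set ℝ, (∀ v, ∃ a b : ℝ, a ≤ b ∧ f v = Set.Icc a b) ∧
    ∀ u v : V, u ≠ v → (G.Adj u v ↔ (f u ∩ f v).Nonempty)

/-- `a` is a middle of `b, c`: every walk from `b` to `c` meets `N(a)`. -/
def IsMiddle (G : SimpleGraph V) (a b c : V) : Prop :=
  ∀ p : G.Walk b c, ∃ x ∈ p.support, G.Adj a x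

/-- `a, b, c` form an asteroidal triple. -/
def AsteroidalTriple (G : SimpleGraph V) (a b c : V) : Prop :=
  a ≠ b ∧ a ≠ c ∧ b ≠ c ∧ ¬ G.Adj a b ∧ ¬ G.Adj a c ∧ ¬ G.Adj b c ∧
  (∃ p : G.Walk b c, ∀ x ∈ p.support, ¬ G.Adj a x) ∧
  (∃ p : G.Walk a c, ∀ x ∈ p.support, ¬ G.Adj b x) ∧
  (∃ p : G.Walk a b, ∀ x ∈ p.support, ¬ G.Adj c x)

/-- The closed neighborhood clique `Q_v` of a simplicial vertex. -/
def Qv (G : SimpleGraph V) (v : V) : Set V := insert v (G.neighborSet v)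

/-- `S_v`: the vertices of `Q_v` having a neighbor outside `Q_v`. -/
def Sv (G : SimpleGraph V) (v : V) : Set V :=
  {x | x ∈ Qv G v ∧ ∃ y, y ∉ Qv G v ∧ G.Adj x y}

/-- A simplicial vertex is special if `S_v` is an inclusion-maximal minimal separator. -/
def IsSpecial (G : SimpleGraph V) (v : V) : Prop :=
  IsSimplicial G v ∧ IsMinSeparator G (Sv G v) ∧
    ∀ S : Set V, IsMinSeparator G S → Sv G v ⊆ S → S = Sv G v

/-- Connected components of `G ∖ S` containing a vertex complete to `S`. -/
def CompleteComponents (G : SimpleGraph V) (S : Set V) :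
    Set ((G.induce (Sᶜ : Set V)).ConnectedComponent) :=
  {C | ∃ x : (Sᶜ : Set V), (G.induce (Sᶜ : Set V)).connectedComponentMk x = C ∧
        S ⊆ G.neighborSet x.1}

/-- The wheel graph: an `n`-cycle plus a universal vertex (`none`). -/
def wheelGraph (n : ℕ) : SimpleGraph (Option (Fin n)) :=
  SimpleGraph.fromRel (fun a b =>
    (∃ i j : Fin n, a = some i ∧ b = some j ∧ (SimpleGraph.cycleGraph n).Adj i j) ∨
    (a = none ∧ b ≠ none))

/-- `y` lies on the tree-path between `x` and `z` in `T`. -/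
def OnTreePath {α : Type*} (T : SimpleGraph α) (x y z : α) : Prop :=
  ∃ p : T.Walk x z, p.IsPath ∧ y ∈ p.support

/-!
Let `S` be a minimal `u`-`w` separator, and `C_u`, `C_w` the components of `u` and `w` in `G - S`;
by minimality every vertex of `S` has a neighbour in each. Two non-adjacent `s, t ∈ S` would be
joined by shortest paths through `C_u` and through `C_w`, and these close up to a chordless cycle
of length at least four, so `S` is a clique. Now pick `v ∈ C_u` whose neighbourhood in `S` is
inclusion-maximal, and suppose `v` misses `t ∈ S`. Let `x` be the vertex before `t` on a shortest
`v`-`t` path through `C_u`. A neighbour `s ∈ S` of `v` not adjacent to `x` would close, with the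
edge `st`, a chordless cycle on the part of the path after the last neighbour of `s`; hence `x`
sees strictly more of `S` than `v`, a contradiction. The vertices so found in `C_u` and `C_w` are
the two required ones.
-/

section

variable {G : SimpleGraph V} {S X : Set V} {u w x y : V}

theorem Chordal.false_of_chordless_cycle (hG : Chordal G) {n : ℕ} (hn : 4 ≤ n) (c : ℕ → V)
    (hstep : ∀ i, i + 1 < n → G.Adj (c i) (c (i + 1)))
    (hclose : G.Adj (c (n - 1)) (c 0))
    (hchord : ∀ i j, i < j → j < n → (c i = c j ∨ G.Adj (c i) (c j)) →
      j = i + 1 ∨ (i = 0 ∧ j = n - 1)) : False := by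
  have hadj_iff : ∀ a b : Fin n, a < b → (G.Adj (c a) (c b) ↔ (cycleGraph n).Adj a b) := by
    intro a b hab
    rw [cycleGraph_adj', Fin.coe_sub_iff_lt.2 hab, Fin.coe_sub_iff_le.2 hab.le]
    rw [Fin.lt_def] at hab
    constructor
    · intro h
      rcases hchord a b hab b.isLt (Or.inr h) with h | ⟨h0, h1⟩ <;> omega
    · intro h
      rcases (show b.val = a.val + 1 ∨ (a.val = 0 ∧ b.val = n - 1) by omega) with h | ⟨h0, h1⟩
      · rw [h]; exact hstep a (by omega)
      · rw [h0, h1]; exact hclose.symm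
  have hne : ∀ a b : Fin n, a < b → c a ≠ c b := by
    intro a b hab h
    rcases hchord a b hab b.isLt (Or.inl h) with h' | ⟨h0, h1⟩
    · exact (hstep a (by omega)).ne (h'.symm ▸ h)
    · exact hclose.ne (h1 ▸ h0 ▸ h.symm)
  let e : cycleGraph n ↪g G :=
    { toFun := fun a => c a
      inj' := fun a b h => by
        by_contra hab
        rcases Ne.lt_or_gt hab with hab | hab
        exacts [hne a b hab h, hne b a hab h.symm]
      map_rel_iff' := fun {a b} => by
        rcases lt_trichotomy a b with hab | rfl | hab
        · exact hadj_iff a b hab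
        · simp
        · rw [G.adj_comm, (cycleGraph n).adj_comm]
          exact hadj_iff b a hab }
  exact (hG n hn).false e

/-- The disjunct `f i = f j` forces `f 0, …, f k` to be pairwise distinct. -/
def IsInducedPath (G : SimpleGraph V) (f : ℕ → V) (k : ℕ) : Prop :=
  (∀ i < k, G.Adj (f i) (f (i + 1))) ∧
    ∀ i j, i < j → j ≤ k → (f i = f j ∨ G.Adj (f i) (f j)) → j = i + 1

namespace IsInducedPath

variable {f : ℕ → V} {k i j : ℕ}

theorem ne (hf : IsInducedPath G f k) (hij : i < j) (hj : j ≤ k) : f i ≠ f j := by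
  intro h
  obtain rfl := hf.2 i j hij hj (Or.inl h)
  exact (hf.1 i (by omega)).ne h

theorem not_adj (hf : IsInducedPath G f k) (hij : i + 1 < j) (hj : j ≤ k) :
    ¬ G.Adj (f i) (f j) := fun h => by
  have := hf.2 i j (by omega) hj (Or.inr h)
  omega

theorem succ_eq_or_succ_eq (hf : IsInducedPath G f k) (hi : i ≤ k) (hj : j ≤ k) (hij : i ≠ j)
    (h : f i = f j ∨ G.Adj (f i) (f j)) : j = i + 1 ∨ i = j + 1 := by
  rcases Ne.lt_or_gt hij with hij | hij
  · exact Or.inl (hf.2 i j hij hj h)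
  · exact Or.inr (hf.2 j i hij hi (h.imp Eq.symm fun h => h.symm))

theorem shift (hf : IsInducedPath G f k) (i : ℕ) :
    IsInducedPath G (fun m => f (i + m)) (k - i) :=
  ⟨fun m hm => hf.1 (i + m) (by omega),
    fun m m' hm hm' h => by have := hf.2 (i + m) (i + m') (by omega) (by omega) h; omega⟩

theorem two_le (hf : IsInducedPath G f k) (hne : f 0 ≠ f k) (hadj : ¬ G.Adj (f 0) (f k)) :
    2 ≤ k := by
  by_contra hk
  obtain rfl | rfl : k = 0 ∨ k = 1 := by omega
  exacts [hne rfl, hadj (hf.1 0 one_pos)]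

theorem mem_of_pos_of_lt (hf : IsInducedPath G f k) {X : Set V}
    (hX : ∀ i ≤ k, f i ∈ insert (f 0) (insert (f k) X)) (hi : 0 < i) (hik : i < k) :
    f i ∈ X := by
  rcases hX i hik.le with h | h | h
  exacts [absurd h (hf.ne hi hik.le).symm, absurd h (hf.ne hik le_rfl), h]

end IsInducedPath

theorem Chordal.false_of_separated_inducedPaths (hG : Chordal G) {f g : ℕ → V} {k l : ℕ}
    (hf : IsInducedPath G f k) (hg : IsInducedPath G g l) (hk : 2 ≤ k) (hl : 2 ≤ l)
    (h0 : f 0 = g 0) (hend : f k = g l)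
    (hsep : ∀ i j, 0 < i → i < k → 0 < j → j < l → ¬ (f i = g j ∨ G.Adj (f i) (g j))) :
    False := by
  -- the cycle runs backwards along `f` from `f k` to `f 0 = g 0`, then forwards along `g`
  let c : ℕ → V := fun m => if m ≤ k then f (k - m) else g (m - k)
  have hcf : ∀ m ≤ k, c m = f (k - m) := fun m hm => if_pos hm
  have hcg : ∀ m, k ≤ m → c m = g (m - k) := by
    intro m hm
    rcases hm.eq_or_lt with rfl | hm
    · simp [c, h0]
    · exact if_neg (by omega)
  refine hG.false_of_chordless_cycle (n := k + l) (by omega) c (fun i hi => ?_) ?_ ?_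
  · rcases Nat.lt_or_ge i k with hik | hik
    · rw [hcf i hik.le, hcf (i + 1) hik, show k - i = k - (i + 1) + 1 by omega]
      exact (hf.1 _ (by omega)).symm
    · rw [hcg i hik, hcg (i + 1) (by omega), show i + 1 - k = i - k + 1 by omega]
      exact hg.1 _ (by omega)
  · rw [hcg _ (by omega), hcf 0 (by omega), Nat.sub_zero, hend]
    simpa [show k + l - 1 - k + 1 = l by omega] using hg.1 (k + l - 1 - k) (by omega)
  · intro i j hij hj h
    by_cases hjk : j ≤ k
    · rw [hcf i (by omega), hcf j hjk] at h
      have := hf.succ_eq_or_succ_eq (i := k - i) (j := k - j) (by omega) (by omega) (by omega) h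
      omega
    by_cases hik : k ≤ i
    · rw [hcg i hik, hcg j (by omega)] at h
      have := hg.succ_eq_or_succ_eq (i := i - k) (j := j - k) (by omega) (by omega) (by omega) h
      omega
    rcases Nat.eq_zero_or_pos i with rfl | hi
    · rw [hcf 0 (by omega), Nat.sub_zero, hend, hcg j (by omega)] at h
      have := hg.succ_eq_or_succ_eq (i := l) (j := j - k) le_rfl (by omega) (by omega) h
      omega
    · rw [hcf i (by omega), hcg j (by omega)] at h
      exact absurd h (hsep (k - i) (j - k) (by omega) (by omega) (by omega) (by omega))

theorem Chordal.exists_adj_of_adj_ends (hG : Chordal G) {f : ℕ → V} {k : ℕ}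
    (hf : IsInducedPath G f k) (hk : 2 ≤ k) {s : V} (hs : ∀ m, 0 < m → m < k → s ≠ f m)
    (hs0 : G.Adj s (f 0)) (hsk : G.Adj s (f k)) : ∃ m, 0 < m ∧ m < k ∧ G.Adj s (f m) := by
  by_contra! hno
  let g : ℕ → V := fun m => if m = 0 then f 0 else if m = 1 then s else f k
  have hg : IsInducedPath G g 2 := by
    refine ⟨fun i hi => ?_, fun i j hij hj h => ?_⟩
    · obtain rfl | rfl : i = 0 ∨ i = 1 := by omega
      exacts [hs0.symm, hsk]
    · by_contra hji
      obtain ⟨rfl, rfl⟩ : i = 0 ∧ j = 2 := by omega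
      rcases h with h | h
      exacts [hf.ne (by omega) le_rfl h, hf.not_adj (by omega) le_rfl h]
  refine hG.false_of_separated_inducedPaths hf hg hk le_rfl rfl rfl fun i j hi hik hj hjl => ?_
  obtain rfl : j = 1 := by omega
  rintro (h | h)
  exacts [hs i hi hik h.symm, hno i hi hik h.symm]

def IsWalkIn (G : SimpleGraph V) (X : Set V) (f : ℕ → V) (k : ℕ) : Prop :=
  (∀ i ≤ k, f i ∈ X) ∧ ∀ i < k, G.Adj (f i) (f (i + 1))

theorem IsWalkIn.shortcut {f : ℕ → V} {k i d : ℕ} (hf : IsWalkIn G X f k) (hd : i + d ≤ k)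
    (hjump : i + d < k → G.Adj (f i) (f (i + 1 + d))) :
    IsWalkIn G X (fun m => if m ≤ i then f m else f (m + d)) (k - d) := by
  refine ⟨fun m hm => ?_, fun m hm => ?_⟩
  · dsimp only
    split_ifs <;> exact hf.1 _ (by omega)
  · dsimp only
    rcases Nat.lt_trichotomy m i with h | rfl | h
    · rw [if_pos h.le, if_pos (by omega)]
      exact hf.2 m (by omega)
    · rw [if_pos le_rfl, if_neg (by omega)]
      exact hjump (by omega)
    · rw [if_neg (by omega), if_neg (by omega), show m + 1 + d = m + d + 1 by omega]
      exact hf.2 _ (by omega)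

theorem IsWalkIn.isInducedPath_of_minimal {f : ℕ → V} {k : ℕ} (hf : IsWalkIn G X f k)
    (hmin : ∀ g l, IsWalkIn G X g l → g 0 = f 0 → g l = f k → k ≤ l) :
    IsInducedPath G f k := by
  refine ⟨hf.2, fun i j hij hjk h => ?_⟩
  by_contra hji
  rcases h with heq | hadj
  · have hw := hf.shortcut (i := i) (d := j - i) (by omega) fun h => by
      rw [heq, show i + 1 + (j - i) = j + 1 by omega]
      exact hf.2 j (by omega)
    have := hmin _ _ hw (by simp) (by
      split_ifs
      · rw [show k - (j - i) = i by omega, heq, show j = k by omega]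
      · rw [show k - (j - i) + (j - i) = k by omega])
    omega
  · have hw := hf.shortcut (i := i) (d := j - i - 1) (by omega) fun _ => by
      rwa [show i + 1 + (j - i - 1) = j by omega]
    have := hmin _ _ hw (by simp) (by
      rw [if_neg (by omega), show k - (j - i - 1) + (j - i - 1) = k by omega])
    omega

theorem exists_isInducedPath_of_walk {a b : V} (p : G.Walk a b) (hp : ∀ z ∈ p.support, z ∈ X) :
    ∃ f k, IsInducedPath G f k ∧ f 0 = a ∧ f k = b ∧ ∀ i ≤ k, f i ∈ X := by
  classical
  have hex : ∃ k, ∃ f, IsWalkIn G X f k ∧ f 0 = a ∧ f k = b :=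
    ⟨p.length, p.getVert, ⟨fun i _ => hp _ (p.getVert_mem_support i),
      fun i hi => p.adj_getVert_succ hi⟩, p.getVert_zero, p.getVert_length⟩
  obtain ⟨f, hf, hf0, hfk⟩ := Nat.find_spec hex
  exact ⟨f, _, hf.isInducedPath_of_minimal fun g l hg hg0 hgl =>
    Nat.find_min' hex ⟨g, hg, hg0.trans hf0, hgl.trans hfk⟩, hf0, hfk, hf.1⟩

/-- The component of `u` in `G - S`; empty when `u ∈ S`. -/
def componentAvoiding (G : SimpleGraph V) (S : Set V) (u : V) : Set V :=
  {x | ∃ p : G.Walk u x, ∀ z ∈ p.support, z ∉ S}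

theorem mem_componentAvoiding_self (hu : u ∉ S) : u ∈ componentAvoiding G S u :=
  ⟨.nil, by simpa using hu⟩

theorem notMem_of_mem_componentAvoiding (hx : x ∈ componentAvoiding G S u) : x ∉ S := by
  obtain ⟨p, hp⟩ := hx
  exact hp x p.end_mem_support

theorem mem_componentAvoiding_of_mem_support {p : G.Walk u x} (hp : ∀ z ∈ p.support, z ∉ S)
    {z : V} (hz : z ∈ p.support) : z ∈ componentAvoiding G S u := by
  classical
  exact ⟨p.takeUntil z hz, fun y hy => hp y (p.support_takeUntil_subset_support hz hy)⟩

theorem componentAvoiding_subset (hx : x ∈ componentAvoiding G S u) :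
    componentAvoiding G S x ⊆ componentAvoiding G S u := by
  rintro y ⟨q, hq⟩
  obtain ⟨p, hp⟩ := hx
  refine ⟨p.append q, fun z hz => ?_⟩
  rcases (Walk.mem_support_append_iff p q).mp hz with h | h
  exacts [hp z h, hq z h]

theorem mem_componentAvoiding_of_adj (hx : x ∈ componentAvoiding G S u) (hxy : G.Adj x y)
    (hy : y ∉ S) : y ∈ componentAvoiding G S u :=
  componentAvoiding_subset hx
    ⟨hxy.toWalk, by simp [notMem_of_mem_componentAvoiding hx, hy]⟩

theorem exists_walk_of_mem_componentAvoiding (hx : x ∈ componentAvoiding G S u)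
    (hy : y ∈ componentAvoiding G S u) :
    ∃ p : G.Walk x y, ∀ z ∈ p.support, z ∈ componentAvoiding G S u := by
  obtain ⟨p, hp⟩ := hx
  obtain ⟨q, hq⟩ := hy
  refine ⟨p.reverse.append q, fun z hz => ?_⟩
  rcases (Walk.mem_support_append_iff _ q).mp hz with h | h
  · exact mem_componentAvoiding_of_mem_support hp (by simpa using h)
  · exact mem_componentAvoiding_of_mem_support hq h

theorem Separates.not_eq_or_adj (hsep : Separates G S u w) (hx : x ∈ componentAvoiding G S u)
    (hy : y ∈ componentAvoiding G S w) : ¬ (x = y ∨ G.Adj x y) := by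
  suffices ∀ {z}, z ∈ componentAvoiding G S u → z ∉ componentAvoiding G S w by
    rintro (rfl | hxy)
    exacts [this hx hy,
      this hx (mem_componentAvoiding_of_adj hy hxy.symm (notMem_of_mem_componentAvoiding hx))]
  rintro z ⟨p, hp⟩ ⟨q, hq⟩
  obtain ⟨s, hs, hsS⟩ := hsep (p.append q.reverse)
  rcases (Walk.mem_support_append_iff _ _).mp hs with h | h
  exacts [hp s h hsS, hq s (by simpa using h) hsS]

theorem exists_adj_of_exists_mem_support {v : V} (p : G.Walk u v) (hu : u ∉ S)
    (hp : ∃ z ∈ p.support, z ∈ S) :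
    ∃ x ∈ componentAvoiding G S u, ∃ s ∈ p.support, s ∈ S ∧ G.Adj x s := by
  induction p with
  | nil =>
    obtain ⟨z, hz, hzS⟩ := hp
    simp only [Walk.support_nil, List.mem_singleton] at hz
    exact absurd (hz ▸ hzS) hu
  | @cons u y v huy q ih =>
    by_cases hy : y ∈ S
    · exact ⟨u, mem_componentAvoiding_self hu, y, by simp, hy, huy⟩
    obtain ⟨z, hz, hzS⟩ := hp
    rw [Walk.support_cons, List.mem_cons] at hz
    obtain ⟨x, hx, s, hs, hsS, hxs⟩ :=
      ih hy ⟨z, hz.resolve_left (by rintro rfl; exact hu hzS), hzS⟩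
    have hyu := mem_componentAvoiding_of_adj (mem_componentAvoiding_self hu) huy hy
    exact ⟨x, componentAvoiding_subset hyu hx, s, by simp [hs], hsS, hxs⟩

theorem IsMinUWSeparator.symm (h : IsMinUWSeparator G S u w) : IsMinUWSeparator G S w u := by
  obtain ⟨huw, hadj, huS, hwS, hsep, hmin⟩ := h
  have hrev : ∀ {T : Set V} {a b : V}, Separates G T a b → Separates G T b a := fun hT p => by
    simpa using hT p.reverse
  exact ⟨huw.symm, fun h' => hadj h'.symm, hwS, huS, hrev hsep,
    fun T hT hsep' => hmin T hT (hrev hsep')⟩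

theorem IsMinUWSeparator.exists_adj_of_mem (h : IsMinUWSeparator G S u w) {s : V} (hs : s ∈ S) :
    ∃ x ∈ componentAvoiding G S u, G.Adj x s := by
  obtain ⟨-, -, huS, -, hsep, hmin⟩ := h
  obtain ⟨p, hp⟩ : ∃ p : G.Walk u w, ∀ z ∈ p.support, z ∉ S \ {s} := by
    simpa [Separates] using hmin _ (Set.sdiff_singleton_ssubset.mpr hs)
  obtain ⟨x, hx, s', hs', hs'S, hxs'⟩ := exists_adj_of_exists_mem_support p huS (hsep p)
  obtain rfl : s' = s := by by_contra hne; exact hp s' hs' ⟨hs'S, hne⟩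
  exact ⟨x, hx, hxs'⟩

theorem IsMinUWSeparator.isClique (hG : Chordal G) (h : IsMinUWSeparator G S u w) :
    G.IsClique S := by
  intro s hs t ht hst
  by_contra hadj
  have hpath : ∀ {a b}, IsMinUWSeparator G S a b → ∃ f k, IsInducedPath G f k ∧ 2 ≤ k ∧
      f 0 = s ∧ f k = t ∧ ∀ i, 0 < i → i < k → f i ∈ componentAvoiding G S a := by
    intro a b hab
    obtain ⟨x, hx, hxs⟩ := hab.exists_adj_of_mem hs
    obtain ⟨y, hy, hyt⟩ := hab.exists_adj_of_mem ht
    obtain ⟨p, hp⟩ := exists_walk_of_mem_componentAvoiding hx hy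
    obtain ⟨f, k, hf, rfl, rfl, hfX⟩ := exists_isInducedPath_of_walk
      (X := insert s (insert t (componentAvoiding G S a))) (.cons hxs.symm (p.concat hyt)) (by
        intro z hz
        simp only [Walk.support_cons, Walk.support_concat, List.mem_cons,
          List.mem_append, List.not_mem_nil, or_false] at hz
        rcases hz with rfl | hz | rfl
        exacts [.inl rfl, .inr (.inr (hp z hz)), .inr (.inl rfl)])
    exact ⟨f, k, hf, hf.two_le hst hadj, rfl, rfl, fun i => hf.mem_of_pos_of_lt hfX⟩
  obtain ⟨f, k, hf, hk, hf0, hfk, hfC⟩ := hpath h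
  obtain ⟨g, l, hg, hl, hg0, hgl, hgC⟩ := hpath h.symm
  exact hG.false_of_separated_inducedPaths hf hg hk hl (hf0.trans hg0.symm) (hfk.trans hgl.symm)
    fun i j hi hik hj hjl => h.2.2.2.2.1.not_eq_or_adj (hfC i hi hik) (hgC j hj hjl)

theorem IsMinUWSeparator.exists_subset_neighborSet [Finite V] (hG : Chordal G)
    (h : IsMinUWSeparator G S u w) : ∃ x ∈ componentAvoiding G S u, S ⊆ G.neighborSet x := by
  classical
  set C := componentAvoiding G S u
  obtain ⟨v, hv, hvmax⟩ := (Set.toFinite C).exists_maximalFor (fun x => G.neighborSet x ∩ S) C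
    ⟨u, mem_componentAvoiding_self h.2.2.1⟩
  refine ⟨v, hv, fun t ht => ?_⟩
  by_contra hvt
  obtain ⟨a, ha, hat⟩ := h.exists_adj_of_mem ht
  obtain ⟨p, hp⟩ := exists_walk_of_mem_componentAvoiding hv ha
  obtain ⟨f, L, hf, hf0, hfL, hfX⟩ := exists_isInducedPath_of_walk (X := insert t C)
    (p.concat hat) (by
      intro z hz
      simp only [Walk.support_concat, List.mem_append,
        List.mem_singleton] at hz
      rcases hz with hz | rfl
      exacts [.inr (hp z hz), .inl rfl])
  have hvS : v ∉ S := notMem_of_mem_componentAvoiding hv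
  have hL : 2 ≤ L := hf.two_le (by rw [hf0, hfL]; rintro rfl; exact hvS ht) (hf0 ▸ hfL ▸ hvt)
  have hx : f (L - 1) ∈ C := hf.mem_of_pos_of_lt (fun i hi => .inr (hfL ▸ hfX i hi)) (by omega) (by omega)
  have hsub : G.neighborSet v ∩ S ⊆ G.neighborSet (f (L - 1)) ∩ S := by
    rintro s ⟨hvs, hs⟩
    refine ⟨?_, hs⟩
    by_contra hxs
    have hst : s ≠ t := by rintro rfl; exact hvt hvs
    set i := Nat.findGreatest (fun m => G.Adj s (f m)) (L - 1)
    have hi : G.Adj s (f i) :=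
      Nat.findGreatest_spec (P := fun m => G.Adj s (f m)) (Nat.zero_le _) (hf0 ▸ hvs.symm)
    have hiL : i < L - 1 := lt_of_le_of_ne (Nat.findGreatest_le _) fun h => hxs (h ▸ hi).symm
    have hoff : ∀ m, 0 < m → m < L - i → s ≠ f (i + m) := fun m _ hmL hsm => by
      rcases hfX (i + m) (by omega) with h' | h'
      exacts [hst (hsm.trans h'), notMem_of_mem_componentAvoiding h' (hsm ▸ hs)]
    have hsL : G.Adj s (f (i + (L - i))) := by
      rw [show i + (L - i) = L by omega, hfL]
      exact h.isClique hG hs ht hst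
    obtain ⟨m, hm, hmL, hsm⟩ := hG.exists_adj_of_adj_ends (hf.shift i) (by omega) hoff hi hsL
    exact Nat.findGreatest_is_greatest (show i < i + m by omega) (by omega) hsm
  have hxt : G.Adj (f (L - 1)) t := by
    simpa [show L - 1 + 1 = L by omega, hfL] using hf.1 (L - 1) (by omega)
  exact hvt (hvmax hx hsub ⟨hxt, ht⟩).1

end

theorem stmt2 [Fintype V] (G : SimpleGraph V) (hG : Chordal G)
    (S : Set V) (hS : IsMinSeparator G S) :
    ∃ x y : V, x ∉ S ∧ y ∉ S ∧ x ≠ y ∧ Separates G S x y ∧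
      S ⊆ G.neighborSet x ∧ S ⊆ G.neighborSet y := by
  obtain ⟨u, w, h⟩ := hS
  have hsep : Separates G S u w := h.2.2.2.2.1
  obtain ⟨x, hx, hxS⟩ := h.exists_subset_neighborSet hG
  obtain ⟨y, hy, hyS⟩ := h.symm.exists_subset_neighborSet hG
  refine ⟨x, y, notMem_of_mem_componentAvoiding hx, notMem_of_mem_componentAvoiding hy,
    fun hxy => hsep.not_eq_or_adj hx hy (.inl hxy), fun p => ?_, hxS, hyS⟩
  by_contra! hp
  exact hsep.not_eq_or_adj (componentAvoiding_subset hx ⟨p, hp⟩) hy (.inl rfl)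
end

section
/- If T is a clique tree of a chordal graph G and QQ' is an edge of T, then Q ∩ Q' is a minimal separator of G; in fact, Q ∩ Q' is a minimal {v,v'}-separator for any v ∈ Q \ Q' and v' ∈ Q' \ Q. -/
open SimpleGraph

variable {V : Type*}

/-!
Deleting the tree edge `QQ'` splits `T` into the part reachable from `Q` and the rest, which
contains `Q'` because edges of a tree are bridges. By the subtree property, a vertex lying in
cliques on both parts lies in every clique along a tree walk between them; such a walk crosses
`QQ'`, so the vertex lies in `Q ∩ Q'`. All cliques through `v ∈ Q \ Q'` lie on `Q`'s part and
none through `v' ∈ Q' \ Q` does. Every edge of `G` lies in a maximal clique, so a walk from `v`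
to `v'` has a step `y z` where all cliques of `y` lie on `Q`'s part but some clique of `z` does
not; the clique containing `y z` then puts `z` on both parts, i.e. in `Q ∩ Q'`. Minimality holds
because every vertex of `Q ∩ Q'` is adjacent to both `v` and `v'`.
-/

open SimpleGraph

theorem SimpleGraph.Walk.mem_edges_of_reachable_of_not_reachable {α : Type*} {T : SimpleGraph α}
    {Q Q' a b : α} (p : T.Walk a b) (ha : (T.deleteEdges {s(Q, Q')}).Reachable a Q)
    (hb : ¬ (T.deleteEdges {s(Q, Q')}).Reachable b Q) : s(Q, Q') ∈ p.edges := by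
  obtain ⟨d, hd, hfst, hsnd⟩ :=
    p.exists_boundary_dart {R | (T.deleteEdges {s(Q, Q')}).Reachable R Q} ha hb
  have hedge : d.edge = s(Q, Q') := by
    by_contra hne
    exact hsnd ((deleteEdges_adj.2 ⟨d.adj, hne⟩).reachable.symm.trans hfst)
  exact hedge ▸ List.mem_map_of_mem hd

section Separators

variable {G : SimpleGraph V}

theorem exists_isMaxClique_superset {s : Set V} (hs : G.IsClique s) :
    ∃ t, IsMaxClique G t ∧ s ⊆ t := by
  obtain ⟨t, hst, ht⟩ := zorn_subset_nonempty {t | G.IsClique t}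
    (fun c hc hchain _ => ⟨⋃₀ c, (isClique_sUnion hchain.directedOn).2 hc,
      fun _ => Set.subset_sUnion_of_mem⟩) s hs
  exact ⟨t, ⟨ht.prop, fun u hu htu => htu.antisymm (ht.2 hu htu)⟩, hst⟩

theorem IsMaxClique.exists_mem_notMem_of_ne {s t : Set V} (hs : IsMaxClique G s)
    (ht : IsMaxClique G t) (hne : s ≠ t) : ∃ v ∈ s, v ∉ t := by
  by_contra! h
  exact hne (hs.2 t ht.1 h)

theorem SimpleGraph.IsClique.inter_subset_commonNeighbors {s t : Set V} (hs : G.IsClique s)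
    (ht : G.IsClique t) {v v' : V} (hv : v ∈ s) (hvt : v ∉ t) (hv' : v' ∈ t)
    (hv's : v' ∉ s) :
    s ∩ t ⊆ G.commonNeighbors v v' := fun _ hx =>
  ⟨hs hv hx.1 (ne_of_mem_of_not_mem hx.2 hvt).symm,
    ht hv' hx.2 (ne_of_mem_of_not_mem hx.1 hv's).symm⟩

theorem isMinUWSeparator_of_subset_commonNeighbors {S : Set V} {u w : V} (hu : u ∉ S)
    (hw : w ∉ S) (hsep : Separates G S u w) (hS : S ⊆ G.commonNeighbors u w) :
    IsMinUWSeparator G S u w := by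
  refine ⟨?_, fun h => ?_, hu, hw, hsep, fun S' hS' hsep' => ?_⟩
  · rintro rfl
    obtain ⟨x, hx, hxS⟩ := hsep Walk.nil
    rw [Walk.support_nil, List.mem_singleton] at hx
    exact hu (hx ▸ hxS)
  · obtain ⟨x, hx, hxS⟩ := hsep h.toWalk
    rw [Adj.toWalk, Walk.support_cons, Walk.support_nil, List.mem_pair] at hx
    rcases hx with rfl | rfl
    exacts [hu hxS, hw hxS]
  · obtain ⟨s, hs, hs'⟩ := Set.exists_of_ssubset hS'
    have hus : G.Adj u s := (hS hs).1
    have hsw : G.Adj s w := (hS hs).2.symm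
    obtain ⟨x, hx, hxS'⟩ := hsep' (Walk.cons hus (Walk.cons hsw Walk.nil))
    simp only [Walk.support_cons, Walk.support_nil, List.mem_cons,
      List.not_mem_nil, or_false] at hx
    rcases hx with rfl | rfl | rfl
    exacts [hu (hS'.subset hxS'), hs' hxS', hw (hS'.subset hxS')]

variable {T : SimpleGraph (MaxCliques G)}

theorem IsCliqueTree.mem_inter_of_reachable_of_not_reachable (hT : IsCliqueTree G T)
    {Q Q' R₁ R₂ : MaxCliques G} {x : V} (h₁ : x ∈ R₁.1) (h₂ : x ∈ R₂.1)
    (hR₁ : (T.deleteEdges {s(Q, Q')}).Reachable R₁ Q)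
    (hR₂ : ¬ (T.deleteEdges {s(Q, Q')}).Reachable R₂ Q) : x ∈ Q.1 ∩ Q'.1 := by
  obtain ⟨w⟩ := (hT.2 x).preconnected ⟨R₁, h₁⟩ ⟨R₂, h₂⟩
  let p := w.map (Embedding.induce _).toHom
  have hx : ∀ R ∈ p.support, x ∈ R.1 := by
    intro R hR
    rw [Walk.support_map] at hR
    obtain ⟨a, _, rfl⟩ := List.mem_map.1 hR
    exact a.2
  have hQQ' := p.mem_edges_of_reachable_of_not_reachable hR₁ hR₂
  exact ⟨hx Q (p.fst_mem_support_of_mem_edges hQQ'),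
    hx Q' (p.snd_mem_support_of_mem_edges hQQ')⟩

theorem IsCliqueTree.separates_inter (hT : IsCliqueTree G T) {Q Q' : MaxCliques G}
    (hQQ' : T.Adj Q Q') {v v' : V} (hv : v ∈ Q.1) (hvQ' : v ∉ Q'.1) (hv' : v' ∈ Q'.1)
    (hv'Q : v' ∉ Q.1) : Separates G (Q.1 ∩ Q'.1) v v' := by
  have hQ' : ¬ (T.deleteEdges {s(Q, Q')}).Reachable Q' Q := fun h =>
    isAcyclic_iff_forall_adj_isBridge.1 hT.1.isAcyclic hQQ' h.symm
  have side_v : ∀ R : MaxCliques G, v ∈ R.1 → (T.deleteEdges {s(Q, Q')}).Reachable R Q :=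
    fun R hR => by
      by_contra h
      exact hvQ' (hT.mem_inter_of_reachable_of_not_reachable hv hR .rfl h).2
  have side_v' : ¬ ∀ R : MaxCliques G, v' ∈ R.1 → (T.deleteEdges {s(Q, Q')}).Reachable R Q :=
    fun h => hv'Q (hT.mem_inter_of_reachable_of_not_reachable hv' hv' (h Q' hv') hQ').1
  intro p
  obtain ⟨d, hd, hfst, hsnd⟩ := p.exists_boundary_dart
    {y | ∀ R : MaxCliques G, y ∈ R.1 → (T.deleteEdges {s(Q, Q')}).Reachable R Q}
    side_v side_v'
  simp only [Set.mem_ofPred_eq, not_forall] at hsnd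
  obtain ⟨R, hR, hRQ⟩ := hsnd
  obtain ⟨t, ht, hdt⟩ := exists_isMaxClique_superset (G.isClique_pair.2 fun _ => d.adj)
  exact ⟨d.snd, p.dart_snd_mem_support_of_mem_darts hd,
    hT.mem_inter_of_reachable_of_not_reachable (hdt (Set.mem_insert_of_mem _ rfl)) hR
      (hfst ⟨t, ht⟩ (hdt (Set.mem_insert _ _))) hRQ⟩

end Separators

theorem stmt7_general (G : SimpleGraph V)
    (T : SimpleGraph (MaxCliques G)) (hT : IsCliqueTree G T)
    (Q Q' : MaxCliques G) (hQQ : T.Adj Q Q') :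
    IsMinSeparator G (Q.1 ∩ Q'.1) ∧
      ∀ v v' : V, v ∈ Q.1 → v ∉ Q'.1 → v' ∈ Q'.1 → v' ∉ Q.1 →
        IsMinUWSeparator G (Q.1 ∩ Q'.1) v v' := by
  have hmin : ∀ v v' : V, v ∈ Q.1 → v ∉ Q'.1 → v' ∈ Q'.1 → v' ∉ Q.1 →
      IsMinUWSeparator G (Q.1 ∩ Q'.1) v v' := fun v v' hv hvQ' hv' hv'Q =>
    isMinUWSeparator_of_subset_commonNeighbors (fun h => hvQ' h.2) (fun h => hv'Q h.1)
      (hT.separates_inter hQQ hv hvQ' hv' hv'Q)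
      (Q.2.1.inter_subset_commonNeighbors Q'.2.1 hv hvQ' hv' hv'Q)
  obtain ⟨v, hv, hvQ'⟩ := Q.2.exists_mem_notMem_of_ne Q'.2 (Subtype.coe_injective.ne hQQ.ne)
  obtain ⟨v', hv', hv'Q⟩ := Q'.2.exists_mem_notMem_of_ne Q.2 (Subtype.coe_injective.ne hQQ.ne')
  exact ⟨⟨v, v', hmin v v' hv hvQ' hv' hv'Q⟩, hmin⟩

theorem stmt7 [Fintype V] (G : SimpleGraph V) (hG : Chordal G)
    (T : SimpleGraph (MaxCliques G)) (hT : IsCliqueTree G T)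
    (Q Q' : MaxCliques G) (hQQ : T.Adj Q Q') :
    IsMinSeparator G (Q.1 ∩ Q'.1) ∧
      ∀ v v' : V, v ∈ Q.1 → v ∉ Q'.1 → v' ∈ Q'.1 → v' ∉ Q.1 →
        IsMinUWSeparator G (Q.1 ∩ Q'.1) v v' :=
  stmt7_general G T hT Q Q' hQQ
end
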